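/- There exists a set of seven points in ℝ² with pairwise integer distances, no three collinear, no four concyclic, whose diameter (largest pairwise distance) equals 66810. (The distance matrix of such an example has entries as given, e.g. distances 66810, 66555, 66294, 49928, 41238, 40290 from the first point.) -/

import Mathlib

/-- The distance matrix of the second integral heptagon in general position. -/
def D : Matrix (Fin 7) (Fin 7) ℕ :=
  !![    0, 66810, 66555, 66294, 49928, 41238, 40290;
     66810,     0, 32385, 64464, 32258, 25908, 52020;
     66555, 32385,     0, 34191, 16637, 33147, 33405;
     66294, 64464, 34191,     0, 34322, 53244, 26724;
     49928, 32258, 16637, 34322,     0, 20066, 20698;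
     41238, 25908, 33147, 53244, 20066,     0, 32232;
     40290, 52020, 33405, 26724, 20698, 32232,     0]

/-!
The seven points are `(x / 2227, y √2002 / 2227)` for the integer pairs `(x, y)` of `heptagon`.
For such points `2227²` times a squared distance is the integer `x² + 2002 y²`, three of them are
collinear only if an integer cross product vanishes, and four of them on a circle satisfy a common
equation `x² + 2002 y² + u x + v y + w = 0`, which makes an integer `3 × 3` determinant vanish.
The resulting integer identities and non-vanishing conditions are decided by computation.
-/

open Matrix

theorem EuclideanSpace.sq_dist_eq_fin_two (a b : EuclideanSpace ℝ (Fin 2)) :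
    dist a b ^ 2 = (a 0 - b 0) ^ 2 + (a 1 - b 1) ^ 2 := by
  simp [EuclideanSpace.dist_sq_eq, Fin.sum_univ_two, Real.dist_eq, sq_abs]

theorem EuclideanSpace.cross_sub_eq_zero_of_collinear {a b c : EuclideanSpace ℝ (Fin 2)}
    (h : Collinear ℝ {a, b, c}) :
    (b 0 - a 0) * (c 1 - a 1) - (b 1 - a 1) * (c 0 - a 0) = 0 := by
  obtain ⟨v, hv⟩ := (collinear_iff_of_mem (Set.mem_insert a _)).mp h
  obtain ⟨rb, rfl⟩ := hv b (by simp)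
  obtain ⟨rc, rfl⟩ := hv c (by simp)
  simp only [vadd_eq_add, PiLp.add_apply, PiLp.smul_apply, smul_eq_mul]
  ring

def quadForm (d : ℤ) (v : ℤ × ℤ) : ℤ := v.1 ^ 2 + d * v.2 ^ 2

def cross (v w : ℤ × ℤ) : ℤ := v.1 * w.2 - v.2 * w.1

def circleMatrix (d : ℤ) (p q r t : ℤ × ℤ) : Matrix (Fin 3) (Fin 3) ℤ :=
  !![quadForm d q - quadForm d p, q.1 - p.1, q.2 - p.2;
     quadForm d r - quadForm d p, r.1 - p.1, r.2 - p.2;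
     quadForm d t - quadForm d p, t.1 - p.1, t.2 - p.2]

noncomputable def scaledPoint (d m : ℕ) (v : ℤ × ℤ) : EuclideanSpace ℝ (Fin 2) :=
  !₂[v.1 / m, v.2 * √d / m]

section scaledPoint

variable {d m : ℕ}

@[simp]
theorem scaledPoint_apply_zero (v : ℤ × ℤ) : scaledPoint d m v 0 = v.1 / m := rfl

@[simp]
theorem scaledPoint_apply_one (v : ℤ × ℤ) : scaledPoint d m v 1 = v.2 * √d / m := rfl

theorem sq_dist_scaledPoint (hm : m ≠ 0) (v w : ℤ × ℤ) :
    dist (scaledPoint d m v) (scaledPoint d m w) ^ 2 = quadForm d (v - w) / m ^ 2 := by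
  rw [EuclideanSpace.sq_dist_eq_fin_two]
  simp only [scaledPoint_apply_zero, scaledPoint_apply_one, quadForm]
  push_cast [Prod.fst_sub, Prod.snd_sub]
  field_simp
  rw [Real.sq_sqrt d.cast_nonneg]
  ring

theorem dist_scaledPoint_eq (hm : m ≠ 0) {v w : ℤ × ℤ} {k : ℕ}
    (h : quadForm d (v - w) = (m * k) ^ 2) :
    dist (scaledPoint d m v) (scaledPoint d m w) = k := by
  have hsq := sq_dist_scaledPoint (d := d) hm v w
  rw [h] at hsq
  push_cast at hsq
  rw [mul_pow, mul_div_cancel_left₀ _ (by positivity)] at hsq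
  exact (pow_left_inj₀ dist_nonneg k.cast_nonneg two_ne_zero).mp hsq

theorem cross_eq_zero_of_collinear_scaledPoint (hd : d ≠ 0) (hm : m ≠ 0) {u v w : ℤ × ℤ}
    (h : Collinear ℝ {scaledPoint d m u, scaledPoint d m v, scaledPoint d m w}) :
    cross (v - u) (w - u) = 0 := by
  have hcross := EuclideanSpace.cross_sub_eq_zero_of_collinear h
  simp only [scaledPoint_apply_zero, scaledPoint_apply_one] at hcross
  have key : (cross (v - u) (w - u) : ℝ) * (√d / m ^ 2) = 0 := by
    rw [← hcross]
    simp only [cross]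
    push_cast [Prod.fst_sub, Prod.snd_sub]
    ring
  exact_mod_cast (mul_eq_zero.mp key).resolve_right (by positivity)

theorem quadForm_add_linear_eq_zero_of_dist_eq (hm : m ≠ 0) {z : ℤ × ℤ}
    {c : EuclideanSpace ℝ (Fin 2)} {ρ : ℝ} (h : dist (scaledPoint d m z) c = ρ) :
    (quadForm d z : ℝ) - 2 * m * c 0 * z.1 - 2 * m * c 1 * √d * z.2
      + m ^ 2 * (c 0 ^ 2 + c 1 ^ 2 - ρ ^ 2) = 0 := by
  have hsq := EuclideanSpace.sq_dist_eq_fin_two (scaledPoint d m z) c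
  rw [h] at hsq
  simp only [scaledPoint_apply_zero, scaledPoint_apply_one] at hsq
  field_simp at hsq
  simp only [quadForm]
  push_cast
  linear_combination (-1 : ℝ) * hsq - (z.2 : ℝ) ^ 2 * Real.sq_sqrt d.cast_nonneg

theorem det_circleMatrix_eq_zero (hm : m ≠ 0) {p q r t : ℤ × ℤ}
    {c : EuclideanSpace ℝ (Fin 2)} {ρ : ℝ}
    (hp : dist (scaledPoint d m p) c = ρ) (hq : dist (scaledPoint d m q) c = ρ)
    (hr : dist (scaledPoint d m r) c = ρ) (ht : dist (scaledPoint d m t) c = ρ) :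
    (circleMatrix d p q r t).det = 0 := by
  have ep := quadForm_add_linear_eq_zero_of_dist_eq hm hp
  have eq := quadForm_add_linear_eq_zero_of_dist_eq hm hq
  have er := quadForm_add_linear_eq_zero_of_dist_eq hm hr
  have et := quadForm_add_linear_eq_zero_of_dist_eq hm ht
  suffices ((circleMatrix d p q r t).map (Int.cast : ℤ → ℝ)).det = 0 by
    exact_mod_cast this
  refine exists_mulVec_eq_zero_iff.mp ⟨![1, -2 * m * c 0, -2 * m * c 1 * √d], ?_, ?_⟩
  · intro h0
    simpa using congrFun h0 0
  · ext i
    fin_cases i <;>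
      simp only [circleMatrix, mulVec, dotProduct, Fin.sum_univ_three, Fin.zero_eta, Fin.mk_one,
        Fin.reduceFinMk, Fin.isValue, map_apply, of_apply, cons_val', cons_val_fin_one,
        cons_val_zero, cons_val_one, cons_val, Int.cast_sub, mul_one, Pi.zero_apply]
    · linear_combination eq - ep
    · linear_combination er - ep
    · linear_combination et - ep

end scaledPoint

def heptagon : Fin 7 → ℤ × ℤ :=
  ![(0, 0), (148785870, 0), (130739265, 1560600), (78381054, 2796192),
    (98596712, 1148736), (91548738, 162504), (56346330, 1560600)]

theorem quadForm_heptagon_sub (i j : Fin 7) :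
    quadForm 2002 (heptagon i - heptagon j) = (2227 * D i j) ^ 2 := by
  revert i j; decide

theorem cross_heptagon_ne_zero :
    ∀ i j k : Fin 7, i ≠ j → i ≠ k → j ≠ k →
      cross (heptagon j - heptagon i) (heptagon k - heptagon i) ≠ 0 := by
  decide

theorem det_circleMatrix_heptagon_ne_zero :
    ∀ i j k l : Fin 7, i ≠ j → i ≠ k → i ≠ l → j ≠ k → j ≠ l → k ≠ l →
      (circleMatrix 2002 (heptagon i) (heptagon j) (heptagon k) (heptagon l)).det ≠ 0 := by
  simp only [det_fin_three]
  decide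

theorem D_le (i j : Fin 7) : D i j ≤ 66810 := by
  fin_cases i <;> revert j <;> decide

theorem D_ne_zero {i j : Fin 7} (h : i ≠ j) : D i j ≠ 0 := by
  fin_cases i <;> revert j <;> decide

/-- There is an integral heptagon in general position with diameter `66810`, whose
distance matrix is `D`. -/
theorem exists_integral_heptagon_diameter_66810 :
    ∃ P : Fin 7 → EuclideanSpace ℝ (Fin 2),
      Function.Injective P ∧
      (∀ i j k : Fin 7, i ≠ j → i ≠ k → j ≠ k →
        ¬ Collinear ℝ ({P i, P j, P k} : Set (EuclideanSpace ℝ (Fin 2)))) ∧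
      (∀ i j k l : Fin 7, i ≠ j → i ≠ k → i ≠ l → j ≠ k → j ≠ l → k ≠ l →
        ¬ ∃ (c : EuclideanSpace ℝ (Fin 2)) (ρ : ℝ), 0 < ρ ∧
            dist (P i) c = ρ ∧ dist (P j) c = ρ ∧ dist (P k) c = ρ ∧ dist (P l) c = ρ) ∧
      (∀ i j : Fin 7, dist (P i) (P j) = (D i j : ℝ)) ∧
      (∀ i j : Fin 7, dist (P i) (P j) ≤ 66810) ∧
      (∃ i j : Fin 7, dist (P i) (P j) = 66810) := by
  set P := fun i => scaledPoint 2002 2227 (heptagon i)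
  have hdist (i j : Fin 7) : dist (P i) (P j) = D i j :=
    dist_scaledPoint_eq (by norm_num) (by exact_mod_cast quadForm_heptagon_sub i j)
  refine ⟨P, fun i j hP => ?_, fun i j k hij hik hjk hcol => ?_, ?_, hdist, fun i j => ?_,
    0, 1, ?_⟩
  · by_contra hij
    have h0 := hdist i j
    rw [hP, dist_self] at h0
    exact D_ne_zero hij (by exact_mod_cast h0.symm)
  · exact cross_heptagon_ne_zero i j k hij hik hjk
      (cross_eq_zero_of_collinear_scaledPoint (by norm_num) (by norm_num) hcol)
  · rintro i j k l hij hik hil hjk hjl hkl ⟨c, ρ, -, hi, hj, hk, hl⟩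
    exact det_circleMatrix_heptagon_ne_zero i j k l hij hik hil hjk hjl hkl
      (det_circleMatrix_eq_zero (by norm_num) hi hj hk hl)
  · exact (hdist i j).trans_le (by exact_mod_cast D_le i j)
  · rw [hdist]
    rfl
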